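/- arXiv:math-ph/0106024 — 2 statements merged into one kernel-verified Lean document; each statement's English description precedes it below -/
import Mathlib

section
/- Let Δ > 1 and L ≥ 2 an integer, A(Δ) = (1/2)√(1−Δ⁻²). The smallest eigenvalue of the droplet Hamiltonian H^{++}_{[1,L]} = H^XXZ_{[1,L]} − A(Δ)(S³_1 + S³_L) on (ℂ²)^{⊗L} equals −A(Δ), its eigenspace is exactly span{|↑⋯↑⟩}, and for every nonzero ψ orthogonal to |↑⋯↑⟩ one has ⟨ψ, H^{++}_{[1,L]} ψ⟩/‖ψ‖² ≥ −A(Δ) + (1/2)(1 − Δ⁻¹). -/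
open scoped Classical

noncomputable section

/-- Spin configurations of the chain of length `L`; `true` means down spin. -/
abbrev SpinConf (L : ℕ) := Fin L → Bool

/-- The Hilbert space `(ℂ²)^{⊗L}` in the configuration basis. -/
abbrev ChainSpace (L : ℕ) := EuclideanSpace ℂ (SpinConf L)

/-- The set of down-spin sites of a configuration. -/
def downs {L : ℕ} (σ : SpinConf L) : Finset (Fin L) := Finset.univ.filter fun i => σ i = true

/-- Exchange the spins at sites `i` and `j`. -/
def swapPair {L : ℕ} (i j : Fin L) (σ : SpinConf L) : SpinConf L :=
  fun k => if k = i then σ j else if k = j then σ i else σ k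

/-- The matrix of the nearest-neighbour interaction
`H^XXZ_{i,j} = −Δ⁻¹(S⃗_i·S⃗_j − 1/4) − (1−Δ⁻¹)(S³_iS³_j − 1/4)` in the configuration basis:
it annihilates configurations with equal spins at `i,j`, and on a configuration with
opposite spins it acts by `(1/2)·id − (1/(2Δ))·(spin exchange)`. -/
def bondMat (Δ : ℝ) {L : ℕ} (i j : Fin L) : Matrix (SpinConf L) (SpinConf L) ℂ :=
  fun σ τ =>
    if σ i = σ j then 0
    else (if τ = σ then (1/2 : ℂ) else 0) -
      ((1/(2*Δ) : ℝ) : ℂ) * (if τ = swapPair i j σ then 1 else 0)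

/-- `H^XXZ_{[1,L]} = Σ_{x=1}^{L−1} H^XXZ_{x,x+1}` (sites are `1,…,L`, i.e. `i+1` for `i : Fin L`). -/
def xxzMat (Δ : ℝ) (L : ℕ) : Matrix (SpinConf L) (SpinConf L) ℂ :=
  ∑ x : Fin L, if h : (x : ℕ) + 1 < L then bondMat Δ x ⟨(x : ℕ) + 1, h⟩ else 0

/-- Third spin component at site `i`: diagonal with value `±1/2`. -/
def s3Mat {L : ℕ} (i : Fin L) : Matrix (SpinConf L) (SpinConf L) ℂ :=
  fun σ τ => if τ = σ then (if σ i then (-(1/2) : ℂ) else (1/2 : ℂ)) else 0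

/-- `A(Δ) = (1/2)√(1 − Δ⁻²)`. -/
def aDelta (Δ : ℝ) : ℝ := Real.sqrt (1 - Δ⁻¹ ^ 2) / 2

/-- The droplet Hamiltonian `H^{++}_{[1,L]} = H^XXZ_{[1,L]} − A(Δ)(S³_1 + S³_L)`. -/
def hppMat (Δ : ℝ) (L : ℕ) (hL : 0 < L) : Matrix (SpinConf L) (SpinConf L) ℂ :=
  xxzMat Δ L - ((aDelta Δ : ℝ) : ℂ) •
    (s3Mat (⟨0, hL⟩ : Fin L) + s3Mat (⟨L - 1, by omega⟩ : Fin L))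

/-- The all-up product vector `|↑⋯↑⟩`. -/
def allUpVec (L : ℕ) : ChainSpace L := EuclideanSpace.single (fun _ => false) 1

/-- The all-down product vector `|↓⋯↓⟩`. -/
def allDownVec (L : ℕ) : ChainSpace L := EuclideanSpace.single (fun _ => true) 1

/-- continuous linear map associated to a matrix. -/
def matCLM {L : ℕ} (M : Matrix (SpinConf L) (SpinConf L) ℂ) :
    ChainSpace L →L[ℂ] ChainSpace L :=
  LinearMap.toContinuousLinearMap (Matrix.toEuclideanLin M)

/-- The orthogonal projection onto a subspace, as an operator on the whole space. -/
def projCLM {L : ℕ} (K : Submodule ℂ (ChainSpace L)) : ChainSpace L →L[ℂ] ChainSpace L :=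
  K.subtypeL.comp K.orthogonalProjection

/-- The kink ⊗ antikink droplet state `ξ_{L,n}(x) = ψ^{+−}_{[1,x]}(⌊n/2⌋) ⊗ ψ^{−+}_{[x+1,L]}(⌈n/2⌉)`
written in the configuration basis (site `i : Fin L` has position `i+1`). -/
def dropletVec (q : ℝ) (L n x : ℕ) : ChainSpace L :=
  WithLp.toLp 2 fun σ =>
    if ((downs σ).filter fun i => (i : ℕ) + 1 ≤ x).card = n / 2 ∧
       ((downs σ).filter fun i => x < (i : ℕ) + 1).card = n - n / 2 then
      (q : ℂ) ^ ((∑ i ∈ (downs σ).filter fun i => (i : ℕ) + 1 ≤ x, ((x : ℤ) - (i : ℕ))) +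
        ∑ i ∈ (downs σ).filter fun i => x < (i : ℕ) + 1, (((i : ℕ) : ℤ) + 1 - (x : ℤ)))
    else 0

/-- The droplet subspace `K_{L,n} = span{ξ_{L,n}(x) : ⌊n/2⌋ ≤ x ≤ L − ⌈n/2⌉}`. -/
def dropletSpace (q : ℝ) (L n : ℕ) : Submodule ℂ (ChainSpace L) :=
  Submodule.span ℂ {v | ∃ x : ℕ, n / 2 ≤ x ∧ x ≤ L - (n - n / 2) ∧ v = dropletVec q L n x}

/-- `P_J` for the interval `J` of positions `[a, a+l−1]`: projection onto configurations that
are fully polarized (all up or all down) on `J`. -/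
def pJ (L a l : ℕ) (ψ : ChainSpace L) : ChainSpace L :=
  WithLp.toLp 2 fun σ =>
    if (∀ i : Fin L, a ≤ (i : ℕ) + 1 → (i : ℕ) + 1 ≤ a + l - 1 → σ i = false) ∨
       (∀ i : Fin L, a ≤ (i : ℕ) + 1 → (i : ℕ) + 1 ≤ a + l - 1 → σ i = true) then ψ σ else 0

end

/-! `H^{++} + A(Δ)` is a sum of nonnegative pieces. On a configuration with a domain wall at a
bond, the bond term is `1/2` minus `1/(2Δ)` times the spin exchange, and since the exchange is an
involution, `Re(ψ̄(σ) ψ(σ')) ≤ (|ψ(σ)|² + |ψ(σ')|²)/2` bounds the bond's quadratic form below by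
`(1 − Δ⁻¹)/2` times the weight of such configurations. The boundary fields contribute
`A(Δ)(n₁ + n_L)`. Every configuration other than `↑⋯↑` has a domain wall or a down spin at site 1,
and `(1 − Δ⁻¹)/2 ≤ A(Δ)`, so
`⟨ψ, (H^{++} + A(Δ))ψ⟩ ≥ (1 − Δ⁻¹)/2 · Σ_{σ ≠ ↑⋯↑} |ψ(σ)|²`;
together with `H^{++}|↑⋯↑⟩ = −A(Δ)|↑⋯↑⟩` this gives all four claims. -/

open Finset Matrix ComplexConjugate

theorem Complex.re_conj_mul_le (a b : ℂ) : (conj a * b).re ≤ (‖a‖ ^ 2 + ‖b‖ ^ 2) / 2 := by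
  have h := Complex.re_le_norm (conj a * b)
  rw [norm_mul, Complex.norm_conj] at h
  nlinarith [sq_nonneg (‖a‖ - ‖b‖)]

theorem Finset.sum_re_conj_mul_comp_le_sum_norm_sq {ι : Type*} {s : Finset ι} {f : ι → ι}
    (hf : Function.Involutive f) (hs : ∀ x ∈ s, f x ∈ s) (ψ : ι → ℂ) :
    ∑ x ∈ s, (conj (ψ x) * ψ (f x)).re ≤ ∑ x ∈ s, ‖ψ x‖ ^ 2 := by
  have hperm : ∑ x ∈ s, ‖ψ (f x)‖ ^ 2 = ∑ x ∈ s, ‖ψ x‖ ^ 2 :=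
    sum_nbij' f f hs hs (fun x _ => hf x) (fun x _ => hf x) fun _ _ => rfl
  calc ∑ x ∈ s, (conj (ψ x) * ψ (f x)).re
      ≤ ∑ x ∈ s, (‖ψ x‖ ^ 2 + ‖ψ (f x)‖ ^ 2) / 2 :=
        sum_le_sum fun x _ => Complex.re_conj_mul_le _ _
    _ = ∑ x ∈ s, ‖ψ x‖ ^ 2 := by rw [← sum_div, sum_add_distrib, hperm]; ring

section QuadraticForm

variable {ι : Type*} [Fintype ι] [DecidableEq ι]

theorem inner_toEuclideanLin_self (M : Matrix ι ι ℂ) (ψ : EuclideanSpace ℂ ι) :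
    inner ℂ ψ (toEuclideanLin M ψ) = ∑ σ, conj (ψ σ) * ∑ τ, M σ τ * ψ τ := by
  simp [PiLp.inner_apply, mulVec, dotProduct, mul_comm]

theorem re_inner_toEuclideanLin_diagonal (d : ι → ℝ) (ψ : EuclideanSpace ℂ ι) :
    (inner ℂ ψ (toEuclideanLin (diagonal fun σ => (d σ : ℂ)) ψ)).re = ∑ σ, d σ * ‖ψ σ‖ ^ 2 := by
  rw [inner_toEuclideanLin_self, Complex.re_sum]
  refine sum_congr rfl fun σ _ => ?_
  simp only [diagonal_apply, ite_mul, zero_mul, sum_ite_eq, mem_univ, if_true]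
  rw [mul_left_comm, Complex.conj_mul', ← Complex.ofReal_pow, ← Complex.ofReal_mul,
    Complex.ofReal_re]

end QuadraticForm

section EuclideanSpace

variable {𝕜 ι : Type*} [RCLike 𝕜] [DecidableEq ι]

theorem EuclideanSpace.norm_sq_eq_add_sum_erase [Fintype ι] (ψ : EuclideanSpace 𝕜 ι) (i : ι) :
    ‖ψ‖ ^ 2 = ‖ψ i‖ ^ 2 + ∑ j ∈ univ.erase i, ‖ψ j‖ ^ 2 := by
  rw [EuclideanSpace.norm_sq_eq, add_sum_erase _ (fun j => ‖ψ j‖ ^ 2) (mem_univ i)]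

theorem EuclideanSpace.mem_span_single_of_forall_ne {ψ : EuclideanSpace 𝕜 ι} {i : ι}
    (h : ∀ j ≠ i, ψ j = 0) : ψ ∈ Submodule.span 𝕜 {EuclideanSpace.single i 1} := by
  refine Submodule.mem_span_singleton.mpr ⟨ψ i, ?_⟩
  ext j
  by_cases hj : j = i
  · simp [hj]
  · simp [hj, h j hj]

end EuclideanSpace

theorem aDelta_nonneg (Δ : ℝ) : 0 ≤ aDelta Δ := by
  unfold aDelta; positivity

theorem half_one_sub_inv_nonneg {Δ : ℝ} (hΔ : 1 ≤ Δ) : 0 ≤ (1 / 2) * (1 - Δ⁻¹) := by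
  have := inv_le_one_of_one_le₀ hΔ
  linarith

theorem half_one_sub_inv_le_aDelta {Δ : ℝ} (hΔ : 1 ≤ Δ) : (1 / 2) * (1 - Δ⁻¹) ≤ aDelta Δ := by
  have hq0 : 0 < Δ⁻¹ := by positivity
  have hq1 : Δ⁻¹ ≤ 1 := inv_le_one_of_one_le₀ hΔ
  have h := Real.sqrt_le_sqrt (show (1 - Δ⁻¹) ^ 2 ≤ 1 - Δ⁻¹ ^ 2 by nlinarith)
  rw [Real.sqrt_sq (by linarith)] at h
  unfold aDelta
  linarith

section Chain

variable {L : ℕ}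

theorem swapPair_involutive (i j : Fin L) : Function.Involutive (swapPair i j) := by
  intro σ; funext k; unfold swapPair; split_ifs <;> simp_all

theorem swapPair_apply_left (i j : Fin L) (σ : SpinConf L) : swapPair i j σ i = σ j := by
  simp [swapPair]

theorem swapPair_apply_right (i j : Fin L) (σ : SpinConf L) : swapPair i j σ j = σ i := by
  unfold swapPair; split_ifs <;> simp_all

theorem toEuclideanLin_bondMat_apply (Δ : ℝ) (i j : Fin L) (ψ : ChainSpace L) (σ : SpinConf L) :
    toEuclideanLin (bondMat Δ i j) ψ σ =
      if σ i = σ j then 0 else ψ σ / 2 - ((1 / (2 * Δ) : ℝ) : ℂ) * ψ (swapPair i j σ) := by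
  simp only [toLpLin_apply, mulVec, dotProduct, bondMat]
  split_ifs <;> simp [sub_mul, sum_sub_distrib, ite_mul, mul_assoc, div_eq_inv_mul]

theorem le_re_inner_bondMat {Δ : ℝ} (hΔ : 0 ≤ Δ) (i j : Fin L) (ψ : ChainSpace L) :
    (1 / 2) * (1 - Δ⁻¹) * ∑ σ with σ i ≠ σ j, ‖ψ σ‖ ^ 2
      ≤ (inner ℂ ψ (toEuclideanLin (bondMat Δ i j) ψ)).re := by
  set c : ℝ := 1 / (2 * Δ)
  have hc : 0 ≤ c := by positivity
  have hswap : ∀ σ ∈ (univ.filter fun σ : SpinConf L => σ i ≠ σ j),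
      swapPair i j σ ∈ (univ.filter fun σ : SpinConf L => σ i ≠ σ j) := by
    simp [swapPair_apply_left, swapPair_apply_right, eq_comm]
  have hform : (inner ℂ ψ (toEuclideanLin (bondMat Δ i j) ψ)).re
      = ∑ σ with σ i ≠ σ j, (‖ψ σ‖ ^ 2 / 2 - c * (conj (ψ σ) * ψ (swapPair i j σ)).re) := by
    rw [PiLp.inner_apply, Complex.re_sum, sum_filter]
    refine sum_congr rfl fun σ _ => ?_
    rw [toEuclideanLin_bondMat_apply]
    by_cases h : σ i = σ j
    · simp [h]
    · rw [if_neg h, if_pos h, RCLike.inner_apply', mul_sub, Complex.sub_re, mul_div_assoc',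
        Complex.conj_mul', mul_left_comm, Complex.re_ofReal_mul]
      norm_cast
  have hcross := sum_re_conj_mul_comp_le_sum_norm_sq (swapPair_involutive i j) hswap ψ
  rw [hform, sum_sub_distrib, ← sum_div, ← mul_sum]
  have : (1 / 2) * (1 - Δ⁻¹) = 1 / 2 - c := by simp only [c]; field_simp
  rw [this]
  nlinarith

def wallCount (σ : SpinConf L) : ℝ :=
  ∑ x : Fin L, if h : (x : ℕ) + 1 < L then (if σ x = σ ⟨x + 1, h⟩ then 0 else 1) else 0

theorem le_re_inner_xxzMat {Δ : ℝ} (hΔ : 0 ≤ Δ) (ψ : ChainSpace L) :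
    (1 / 2) * (1 - Δ⁻¹) * ∑ σ, wallCount σ * ‖ψ σ‖ ^ 2
      ≤ (inner ℂ ψ (toEuclideanLin (xxzMat Δ L) ψ)).re := by
  simp only [xxzMat, map_sum, LinearMap.sum_apply, inner_sum, Complex.re_sum,
    wallCount, sum_mul, mul_sum]
  rw [sum_comm]
  refine sum_le_sum fun x _ => ?_
  split_ifs with h
  · refine le_of_eq_of_le ?_ (le_re_inner_bondMat hΔ x ⟨x + 1, h⟩ ψ)
    rw [sum_filter, mul_sum]
    refine sum_congr rfl fun σ _ => ?_
    split_ifs <;> simp_all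
  · simp

def downIndicator (i : Fin L) (σ : SpinConf L) : ℝ := if σ i then 1 else 0

/-- `A(Δ)(n₁ + n_L)`, where `n_i = 1/2 − S³_i` is the number of down spins at site `i`. -/
noncomputable def boundaryWeight (Δ : ℝ) (hL : 0 < L) (σ : SpinConf L) : ℝ :=
  aDelta Δ * (downIndicator ⟨0, hL⟩ σ + downIndicator ⟨L - 1, by omega⟩ σ)

theorem hppMat_add_smul_one (Δ : ℝ) (hL : 0 < L) :
    hppMat Δ L hL + (aDelta Δ : ℂ) • 1
      = xxzMat Δ L + diagonal fun σ => (boundaryWeight Δ hL σ : ℂ) := by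
  ext σ τ
  by_cases hστ : σ = τ
  · subst hστ
    simp only [hppMat, s3Mat, boundaryWeight, downIndicator, Matrix.add_apply, Matrix.sub_apply,
      Matrix.smul_apply, one_apply_eq, diagonal_apply_eq, if_true]
    split_ifs <;> push_cast <;> ring
  · simp [hppMat, s3Mat, one_apply_ne hστ, diagonal_apply_ne _ hστ, Ne.symm hστ]

theorem re_inner_hppMat_add (Δ : ℝ) (hL : 0 < L) (ψ : ChainSpace L) :
    (inner ℂ ψ (toEuclideanLin (hppMat Δ L hL) ψ)).re + aDelta Δ * ‖ψ‖ ^ 2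
      = (inner ℂ ψ (toEuclideanLin (xxzMat Δ L) ψ)).re
        + ∑ σ, boundaryWeight Δ hL σ * ‖ψ σ‖ ^ 2 := by
  have h := congrArg (fun M => (inner ℂ ψ (toEuclideanLin M ψ)).re) (hppMat_add_smul_one Δ hL)
  simp only [map_add, map_smul, LinearMap.add_apply, LinearMap.smul_apply, inner_add_right,
    inner_smul_right, Complex.add_re, Complex.re_ofReal_mul] at h
  have hone : (inner ℂ ψ (toEuclideanLin 1 ψ)).re = ‖ψ‖ ^ 2 := by
    simpa using inner_self_eq_norm_sq (𝕜 := ℂ) ψ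
  rwa [re_inner_toEuclideanLin_diagonal, hone] at h

theorem apply_eq_apply_zero_of_forall_adjacent {α : Type*} {σ : Fin L → α}
    (h : ∀ (x : Fin L) (hx : (x : ℕ) + 1 < L), σ x = σ ⟨x + 1, hx⟩) (k : ℕ) (hk : k < L) :
    σ ⟨k, hk⟩ = σ ⟨0, by omega⟩ := by
  induction k with
  | zero => rfl
  | succ k ih => rw [← h ⟨k, by omega⟩ hk, ih]

theorem wallCount_nonneg (σ : SpinConf L) : 0 ≤ wallCount σ :=
  sum_nonneg fun x _ => by split_ifs <;> norm_num

theorem one_le_wallCount {σ : SpinConf L} (hσ : σ ≠ fun _ => false) (hL : 0 < L)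
    (h0 : σ ⟨0, hL⟩ = false) : 1 ≤ wallCount σ := by
  obtain ⟨x, hx, hwall⟩ : ∃ (x : Fin L) (hx : (x : ℕ) + 1 < L), σ x ≠ σ ⟨x + 1, hx⟩ := by
    by_contra! hconst
    exact hσ (funext fun k => (apply_eq_apply_zero_of_forall_adjacent hconst k k.2).trans h0)
  calc (1 : ℝ) = if h : (x : ℕ) + 1 < L then (if σ x = σ ⟨x + 1, h⟩ then 0 else 1) else 0 := by
        simp [hx, hwall]
    _ ≤ wallCount σ :=
        single_le_sum (f := fun x : Fin L => if h : (x : ℕ) + 1 < L then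
          (if σ x = σ ⟨x + 1, h⟩ then (0 : ℝ) else 1) else 0)
          (fun y _ => by split_ifs <;> norm_num) (mem_univ x)

theorem boundaryWeight_nonneg (Δ : ℝ) (hL : 0 < L) (σ : SpinConf L) :
    0 ≤ boundaryWeight Δ hL σ := by
  unfold boundaryWeight downIndicator
  have := aDelta_nonneg Δ
  split_ifs <;> positivity

theorem le_wallCount_add_boundaryWeight {Δ : ℝ} (hΔ : 1 ≤ Δ) (hL : 0 < L) {σ : SpinConf L}
    (hσ : σ ≠ fun _ => false) :
    (1 / 2) * (1 - Δ⁻¹) ≤ (1 / 2) * (1 - Δ⁻¹) * wallCount σ + boundaryWeight Δ hL σ := by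
  have hγ := half_one_sub_inv_nonneg hΔ
  have hγA := half_one_sub_inv_le_aDelta hΔ
  cases h0 : σ ⟨0, hL⟩
  · nlinarith [one_le_wallCount hσ hL h0, boundaryWeight_nonneg Δ hL σ]
  · have : aDelta Δ ≤ boundaryWeight Δ hL σ := by
      unfold boundaryWeight downIndicator
      rw [h0, if_pos rfl]
      split_ifs <;> nlinarith [aDelta_nonneg Δ]
    nlinarith [wallCount_nonneg σ]

theorem sum_erase_allUp_le_re_inner_hppMat {Δ : ℝ} (hΔ : 1 ≤ Δ) (hL : 0 < L) (ψ : ChainSpace L) :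
    (1 / 2) * (1 - Δ⁻¹) * ∑ σ ∈ univ.erase (fun _ => false), ‖ψ σ‖ ^ 2
      ≤ (inner ℂ ψ (toEuclideanLin (hppMat Δ L hL) ψ)).re + aDelta Δ * ‖ψ‖ ^ 2 := by
  have hγ := half_one_sub_inv_nonneg hΔ
  set γ := (1 / 2) * (1 - Δ⁻¹)
  calc γ * ∑ σ ∈ univ.erase (fun _ => false), ‖ψ σ‖ ^ 2
      ≤ ∑ σ ∈ univ.erase (fun _ => false),
          (γ * wallCount σ + boundaryWeight Δ hL σ) * ‖ψ σ‖ ^ 2 := by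
        rw [mul_sum]
        exact sum_le_sum fun σ hσ => mul_le_mul_of_nonneg_right
          (le_wallCount_add_boundaryWeight hΔ hL (ne_of_mem_erase hσ)) (by positivity)
    _ ≤ ∑ σ, (γ * wallCount σ + boundaryWeight Δ hL σ) * ‖ψ σ‖ ^ 2 :=
        sum_le_sum_of_subset_of_nonneg (subset_univ _) fun σ _ _ =>
          mul_nonneg (add_nonneg (mul_nonneg hγ (wallCount_nonneg σ))
            (boundaryWeight_nonneg Δ hL σ)) (by positivity)
    _ = γ * ∑ σ, wallCount σ * ‖ψ σ‖ ^ 2 + ∑ σ, boundaryWeight Δ hL σ * ‖ψ σ‖ ^ 2 := by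
        rw [mul_sum, ← sum_add_distrib]
        exact sum_congr rfl fun σ _ => by ring
    _ ≤ _ := by
        rw [re_inner_hppMat_add]
        gcongr
        exact le_re_inner_xxzMat (by linarith) ψ

theorem bondMat_apply_allUp (Δ : ℝ) (i j : Fin L) (σ : SpinConf L) :
    bondMat Δ i j σ (fun _ => false) = 0 := by
  by_cases h : σ i = σ j
  · simp [bondMat, h]
  · have hσ : (fun _ => false) ≠ σ := fun he => h (by rw [← he])
    have hswap : (fun _ => false) ≠ swapPair i j σ := fun he =>
      h (by rw [← swapPair_apply_left i j σ, ← swapPair_apply_right i j σ, ← he])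
    simp [bondMat, h, hσ, hswap]

theorem xxzMat_apply_allUp (Δ : ℝ) (σ : SpinConf L) : xxzMat Δ L σ (fun _ => false) = 0 := by
  rw [xxzMat, Matrix.sum_apply]
  refine sum_eq_zero fun x _ => ?_
  split_ifs
  · exact bondMat_apply_allUp Δ _ _ σ
  · rfl

theorem toEuclideanLin_hppMat_allUpVec (Δ : ℝ) (hL : 0 < L) :
    toEuclideanLin (hppMat Δ L hL) (allUpVec L) = ((-aDelta Δ : ℝ) : ℂ) • allUpVec L := by
  have hcol : toEuclideanLin (hppMat Δ L hL + (aDelta Δ : ℂ) • 1) (allUpVec L) = 0 := by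
    rw [hppMat_add_smul_one]
    ext σ
    simp [allUpVec, toLpLin_apply, xxzMat_apply_allUp, boundaryWeight, downIndicator]
  rw [map_add, map_smul, LinearMap.add_apply, LinearMap.smul_apply, toLpLin_one,
    LinearMap.id_apply] at hcol
  rw [eq_neg_of_add_eq_zero_left hcol, Complex.ofReal_neg, neg_smul]

theorem neg_aDelta_mul_norm_sq_le_re_inner_hppMat {Δ : ℝ} (hΔ : 1 ≤ Δ) (hL : 0 < L)
    (ψ : ChainSpace L) :
    -aDelta Δ * ‖ψ‖ ^ 2 ≤ (inner ℂ ψ (toEuclideanLin (hppMat Δ L hL) ψ)).re := by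
  have hexcited : 0 ≤ ∑ σ ∈ univ.erase (fun _ => false), ‖ψ σ‖ ^ 2 := by positivity
  nlinarith [sum_erase_allUp_le_re_inner_hppMat hΔ hL ψ, half_one_sub_inv_nonneg hΔ]

theorem ker_hppMat_add_smul_id {Δ : ℝ} (hΔ : 1 < Δ) (hL : 0 < L) :
    LinearMap.ker (toEuclideanLin (hppMat Δ L hL) + (aDelta Δ : ℂ) • LinearMap.id)
      = Submodule.span ℂ {allUpVec L} := by
  apply le_antisymm
  · intro ψ hψ
    rw [LinearMap.mem_ker, LinearMap.add_apply, LinearMap.smul_apply, LinearMap.id_apply] at hψ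
    have hform : (inner ℂ ψ (toEuclideanLin (hppMat Δ L hL) ψ)).re + aDelta Δ * ‖ψ‖ ^ 2 = 0 := by
      rw [eq_neg_of_add_eq_zero_left hψ, inner_neg_right, inner_smul_right, Complex.neg_re,
        Complex.re_ofReal_mul]
      have hself : (inner ℂ ψ ψ).re = ‖ψ‖ ^ 2 := inner_self_eq_norm_sq (𝕜 := ℂ) ψ
      rw [hself]
      ring
    have hγ : 0 < (1 / 2) * (1 - Δ⁻¹) := by
      have := inv_lt_one_of_one_lt₀ hΔ
      linarith
    have hexcited : ∑ σ ∈ univ.erase (fun _ => false), ‖ψ σ‖ ^ 2 = 0 := by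
      have := sum_erase_allUp_le_re_inner_hppMat hΔ.le hL ψ
      have : 0 ≤ ∑ σ ∈ univ.erase (fun _ => false), ‖ψ σ‖ ^ 2 := by positivity
      nlinarith
    refine EuclideanSpace.mem_span_single_of_forall_ne fun σ hσ => ?_
    have := (sum_eq_zero_iff_of_nonneg fun _ _ => by positivity).mp hexcited σ
      (mem_erase.mpr ⟨hσ, mem_univ σ⟩)
    simpa using this
  · rw [Submodule.span_singleton_le_iff_mem, LinearMap.mem_ker]
    simp [toEuclideanLin_hppMat_allUpVec]

theorem le_re_inner_hppMat_div_of_inner_allUpVec_eq_zero {Δ : ℝ} (hΔ : 1 ≤ Δ) (hL : 0 < L)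
    {ψ : ChainSpace L} (hψ : ψ ≠ 0) (hperp : inner ℂ (allUpVec L) ψ = 0) :
    -aDelta Δ + (1 / 2) * (1 - Δ⁻¹)
      ≤ (inner ℂ ψ (toEuclideanLin (hppMat Δ L hL) ψ)).re / ‖ψ‖ ^ 2 := by
  have hup : ψ (fun _ => false) = 0 := by
    simpa [allUpVec, EuclideanSpace.inner_single_left] using hperp
  have hnorm := EuclideanSpace.norm_sq_eq_add_sum_erase ψ (fun _ => false)
  rw [hup, norm_zero, zero_pow two_ne_zero, zero_add] at hnorm
  rw [le_div_iff₀ (by positivity)]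
  have := sum_erase_allUp_le_re_inner_hppMat hΔ hL ψ
  rw [← hnorm] at this
  linarith

end Chain

/-- the lowest eigenvalue of the droplet Hamiltonian `H^{++}_{[1,L]}` is
`−A(Δ)` with eigenspace exactly `span{|↑⋯↑⟩}`, and every nonzero `ψ ⊥ |↑⋯↑⟩` has Rayleigh
quotient at least `−A(Δ) + (1/2)(1 − Δ⁻¹)`. -/
theorem stmt11 (Δ : ℝ) (hΔ : 1 < Δ) (L : ℕ) (hL : 2 ≤ L) :
    Matrix.toEuclideanLin (hppMat Δ L (by omega)) (allUpVec L)
      = ((-(aDelta Δ) : ℝ) : ℂ) • allUpVec L ∧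
    (∀ ψ : ChainSpace L,
      -(aDelta Δ) * ‖ψ‖ ^ 2 ≤ (inner ℂ ψ (Matrix.toEuclideanLin (hppMat Δ L (by omega)) ψ) : ℂ).re) ∧
    LinearMap.ker (Matrix.toEuclideanLin (hppMat Δ L (by omega)) +
        ((aDelta Δ : ℝ) : ℂ) • (LinearMap.id : ChainSpace L →ₗ[ℂ] ChainSpace L))
      = Submodule.span ℂ {allUpVec L} ∧
    ∀ ψ : ChainSpace L, ψ ≠ 0 → (inner ℂ (allUpVec L) ψ : ℂ) = 0 →
      -(aDelta Δ) + (1/2) * (1 - Δ⁻¹)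
        ≤ (inner ℂ ψ (Matrix.toEuclideanLin (hppMat Δ L (by omega)) ψ) : ℂ).re / ‖ψ‖ ^ 2 := by
  have hL0 : 0 < L := by omega
  exact ⟨toEuclideanLin_hppMat_allUpVec Δ hL0,
    neg_aDelta_mul_norm_sq_le_re_inner_hppMat hΔ.le hL0,
    ker_hppMat_add_smul_id hΔ hL0,
    fun ψ hψ hperp => le_re_inner_hppMat_div_of_inner_allUpVec_eq_zero hΔ.le hL0 hψ hperp⟩
end

section
/- Let Δ > 1, γ = 1 − Δ⁻¹, L ≥ 2, and let ψ ∈ (ℂ²)^{⊗L} be a nonzero vector with energy E = ⟨ψ, H^XXZ_{[1,L]} ψ⟩/‖ψ‖². Then for every integer 1 ≤ l < L there exists a subinterval J = [a, a+l−1] ⊆ [1,L] such that ‖P_J ψ‖²/‖ψ‖² ≥ 1 − ε, where ε = 2E/(γ ⌊L/l⌋). Moreover, if ε < 1, then for this J, ⟨P_J ψ, H^XXZ_{[1,L]} P_J ψ⟩/‖P_J ψ‖² ≤ E/(1−ε) + 2Δ⁻¹ √(ε/(1−ε)). -/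
open scoped Classical

/-!
Each bond contributes at least `(1 - Δ⁻¹)/2` times the weight of the configurations that are
discordant on it, so the energy controls the total discordant weight. A configuration that is not
polarized on an interval has a discordant bond inside it; summing over the `⌊L/l⌋` disjoint blocks
of length `l`, the depolarized weights add up to at most the total discordant weight, so the best
block `J` has depolarized weight at most `ε‖ψ‖²`. In the splitting `ψ = P_J ψ + (1 - P_J) ψ` the
second part has nonnegative energy, and the two parts are coupled only by the two bonds crossing
the boundary of `J`, each by at most `(2Δ)⁻¹ ‖P_J ψ‖ ‖(1 - P_J) ψ‖`.
-/

open Finset ComplexConjugate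

noncomputable section

namespace XXZ

variable {L : ℕ}

lemma swapPair_involutive (i j : Fin L) : Function.Involutive (swapPair i j) := by
  intro σ; funext k
  simp only [swapPair]
  split_ifs <;> simp_all

lemma swapPair_apply_left (i j : Fin L) (σ : SpinConf L) : swapPair i j σ i = σ j := by
  simp [swapPair]

lemma swapPair_apply_right (i j : Fin L) (σ : SpinConf L) : swapPair i j σ j = σ i := by
  by_cases h : j = i
  · subst h; simp [swapPair]
  · simp [swapPair, h]

lemma swapPair_apply_of_ne {i j k : Fin L} (hi : k ≠ i) (hj : k ≠ j) (σ : SpinConf L) :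
    swapPair i j σ k = σ k := by
  simp [swapPair, hi, hj]

def discordSet (i j : Fin L) : Finset (SpinConf L) := univ.filter fun σ => σ i ≠ σ j

lemma sum_discordSet_comp_swapPair {M : Type*} [AddCommMonoid M] (i j : Fin L)
    (f : SpinConf L → M) :
    ∑ σ ∈ discordSet i j, f (swapPair i j σ) = ∑ σ ∈ discordSet i j, f σ := by
  refine Finset.sum_equiv (swapPair_involutive i j).toPerm (fun σ => ?_) (fun _ _ => rfl)
  simp [discordSet, swapPair_apply_left, swapPair_apply_right, eq_comm]

/-- The bond `x` joins the sites `x` and `nextSite x`; the last site has no bond. -/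
def bonds (L : ℕ) : Finset (Fin L) := univ.filter fun x => (x : ℕ) + 1 < L

def nextSite (x : Fin L) : Fin L := if h : (x : ℕ) + 1 < L then ⟨(x : ℕ) + 1, h⟩ else x

lemma val_nextSite {x : Fin L} (hx : x ∈ bonds L) : (nextSite x : ℕ) = (x : ℕ) + 1 := by
  simp_all [nextSite, bonds]

lemma xxzMat_eq_sum_bonds (Δ : ℝ) (L : ℕ) :
    xxzMat Δ L = ∑ x ∈ bonds L, bondMat Δ x (nextSite x) := by
  rw [xxzMat, bonds, sum_filter]
  refine sum_congr rfl fun x _ => ?_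
  split_ifs with h <;> simp [nextSite, h]

def bondForm (Δ : ℝ) (i j : Fin L) (φ χ : ChainSpace L) : ℂ :=
  ∑ σ ∈ discordSet i j,
    conj (φ σ) * ((1/2 : ℂ) * χ σ - ((1/(2*Δ) : ℝ) : ℂ) * χ (swapPair i j σ))

lemma inner_bondMat (Δ : ℝ) (i j : Fin L) (φ χ : ChainSpace L) :
    inner ℂ φ (Matrix.toEuclideanLin (bondMat Δ i j) χ) = bondForm Δ i j φ χ := by
  simp only [PiLp.inner_apply, RCLike.inner_apply', Matrix.toLpLin_apply, Matrix.mulVec,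
    dotProduct]
  rw [bondForm, discordSet, sum_filter]
  refine sum_congr rfl fun σ _ => ?_
  by_cases h : σ i = σ j
  · simp [bondMat, h]
  · simp [bondMat, h, sub_mul, mul_ite]

lemma inner_xxzMat (Δ : ℝ) (φ χ : ChainSpace L) :
    inner ℂ φ (Matrix.toEuclideanLin (xxzMat Δ L) χ) =
      ∑ x ∈ bonds L, bondForm Δ x (nextSite x) φ χ := by
  simp only [xxzMat_eq_sum_bonds, map_sum, LinearMap.sum_apply, inner_sum, inner_bondMat]

def discordWeight (i j : Fin L) (ψ : ChainSpace L) : ℝ := ∑ σ ∈ discordSet i j, ‖ψ σ‖ ^ 2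

lemma discordWeight_nonneg (i j : Fin L) (ψ : ChainSpace L) : 0 ≤ discordWeight i j ψ :=
  sum_nonneg fun _ _ => by positivity

lemma re_bondForm_self (Δ : ℝ) (i j : Fin L) (ψ : ChainSpace L) :
    (bondForm Δ i j ψ ψ).re = discordWeight i j ψ / 2 -
      1 / (2 * Δ) * ∑ σ ∈ discordSet i j, (conj (ψ σ) * ψ (swapPair i j σ)).re := by
  rw [bondForm, Complex.re_sum, discordWeight, sum_div, mul_sum, ← sum_sub_distrib]
  refine sum_congr rfl fun σ _ => ?_
  rw [mul_sub, mul_left_comm, RCLike.conj_mul, mul_left_comm]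
  simp [Complex.mul_re, ← Complex.ofReal_pow]
  ring

/-- `Re (z̄ w) ≤ (|z|² + |w|²)/2`, and `swapPair i j` permutes `discordSet i j`. -/
lemma sum_re_conj_mul_swapPair_le (i j : Fin L) (ψ : ChainSpace L) :
    ∑ σ ∈ discordSet i j, (conj (ψ σ) * ψ (swapPair i j σ)).re ≤ discordWeight i j ψ := by
  calc ∑ σ ∈ discordSet i j, (conj (ψ σ) * ψ (swapPair i j σ)).re
      ≤ ∑ σ ∈ discordSet i j, (‖ψ σ‖ ^ 2 + ‖ψ (swapPair i j σ)‖ ^ 2) / 2 := by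
        refine sum_le_sum fun σ _ => ?_
        have := (Complex.re_le_norm _).trans_eq
          (by rw [norm_mul, RCLike.norm_conj] : ‖conj (ψ σ) * ψ (swapPair i j σ)‖ = _)
        nlinarith [sq_nonneg (‖ψ σ‖ - ‖ψ (swapPair i j σ)‖)]
    _ = discordWeight i j ψ := by
        rw [← sum_div, sum_add_distrib, sum_discordSet_comp_swapPair i j fun σ => ‖ψ σ‖ ^ 2,
          discordWeight]
        ring

lemma discordWeight_le_re_bondForm_self {Δ : ℝ} (hΔ : 0 ≤ Δ) (i j : Fin L) (ψ : ChainSpace L) :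
    (1 - Δ⁻¹) / 2 * discordWeight i j ψ ≤ (bondForm Δ i j ψ ψ).re := by
  have hexch := mul_le_mul_of_nonneg_left (sum_re_conj_mul_swapPair_le i j ψ)
    (by positivity : (0 : ℝ) ≤ 1 / (2 * Δ))
  have : 1 / (2 * Δ) = Δ⁻¹ / 2 := by rw [mul_comm, ← div_div, one_div]
  rw [re_bondForm_self, this]
  rw [this] at hexch
  linarith

lemma bondForm_of_disjoint (Δ : ℝ) (i j : Fin L) {φ χ : ChainSpace L}
    (hdisj : ∀ σ, φ σ = 0 ∨ χ σ = 0) :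
    bondForm Δ i j φ χ = -(((1 / (2 * Δ) : ℝ) : ℂ) *
      ∑ σ ∈ discordSet i j, conj (φ σ) * χ (swapPair i j σ)) := by
  rw [bondForm, mul_sum, ← sum_neg_distrib]
  refine sum_congr rfl fun σ _ => ?_
  rcases hdisj σ with h | h <;> simp [h, mul_left_comm]

lemma bondForm_eq_zero (Δ : ℝ) (i j : Fin L) {φ χ : ChainSpace L}
    (hdisj : ∀ σ, φ σ = 0 ∨ χ σ = 0) (hswap : ∀ σ, φ σ = 0 ∨ χ (swapPair i j σ) = 0) :
    bondForm Δ i j φ χ = 0 := by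
  rw [bondForm_of_disjoint Δ i j hdisj, sum_eq_zero fun σ _ => ?_, mul_zero, neg_zero]
  rcases hswap σ with h | h <;> simp [h]

lemma abs_re_bondForm_le {Δ : ℝ} (hΔ : 0 ≤ Δ) (i j : Fin L) {φ χ : ChainSpace L}
    (hdisj : ∀ σ, φ σ = 0 ∨ χ σ = 0) :
    |(bondForm Δ i j φ χ).re| ≤ 1 / (2 * Δ) * (‖φ‖ * ‖χ‖) := by
  rw [bondForm_of_disjoint Δ i j hdisj, Complex.neg_re, abs_neg, Complex.re_ofReal_mul, abs_mul,
    abs_of_nonneg (by positivity)]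
  gcongr
  calc _ ≤ ‖∑ σ ∈ discordSet i j, conj (φ σ) * χ (swapPair i j σ)‖ := Complex.abs_re_le_norm _
    _ ≤ ∑ σ ∈ discordSet i j, ‖φ σ‖ * ‖χ (swapPair i j σ)‖ :=
        (norm_sum_le _ _).trans_eq (sum_congr rfl fun σ _ => by rw [norm_mul, RCLike.norm_conj])
    _ ≤ ∑ σ, ‖φ σ‖ * ‖χ (swapPair i j σ)‖ :=
        sum_le_sum_of_subset_of_nonneg (subset_univ _) fun _ _ _ => by positivity
    _ ≤ √(∑ σ, ‖φ σ‖ ^ 2) * √(∑ σ, ‖χ (swapPair i j σ)‖ ^ 2) :=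
        Real.sum_mul_le_sqrt_mul_sqrt _ _ _
    _ = ‖φ‖ * ‖χ‖ := by
        rw [Fintype.sum_bijective _ (swapPair_involutive i j).bijective
            (fun σ => ‖χ (swapPair i j σ)‖ ^ 2) (fun σ => ‖χ σ‖ ^ 2) fun _ => rfl,
          ← EuclideanSpace.norm_eq, ← EuclideanSpace.norm_eq]

def totalDiscord (ψ : ChainSpace L) : ℝ := ∑ x ∈ bonds L, discordWeight x (nextSite x) ψ

lemma totalDiscord_nonneg (ψ : ChainSpace L) : 0 ≤ totalDiscord ψ :=
  sum_nonneg fun _ _ => discordWeight_nonneg _ _ _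

lemma totalDiscord_le_re_inner_xxzMat {Δ : ℝ} (hΔ : 0 ≤ Δ) (ψ : ChainSpace L) :
    (1 - Δ⁻¹) / 2 * totalDiscord ψ ≤ (inner ℂ ψ (Matrix.toEuclideanLin (xxzMat Δ L) ψ)).re := by
  rw [inner_xxzMat, Complex.re_sum, totalDiscord, mul_sum]
  exact sum_le_sum fun x _ => discordWeight_le_re_bondForm_self hΔ _ _ ψ

lemma re_inner_xxzMat_self_nonneg {Δ : ℝ} (hΔ : 1 ≤ Δ) (ψ : ChainSpace L) :
    0 ≤ (inner ℂ ψ (Matrix.toEuclideanLin (xxzMat Δ L) ψ)).re := by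
  refine le_trans ?_ (totalDiscord_le_re_inner_xxzMat (by linarith) ψ)
  have : 0 ≤ 1 - Δ⁻¹ := sub_nonneg.2 (inv_le_one_of_one_le₀ hΔ)
  have := totalDiscord_nonneg ψ
  positivity

lemma abs_re_inner_xxzMat_le {Δ : ℝ} (hΔ : 0 ≤ Δ) (B : Finset (Fin L)) {φ χ : ChainSpace L}
    (hdisj : ∀ σ, φ σ = 0 ∨ χ σ = 0)
    (hswap : ∀ x ∈ bonds L, x ∉ B → ∀ σ, φ σ = 0 ∨ χ (swapPair x (nextSite x) σ) = 0) :
    |(inner ℂ φ (Matrix.toEuclideanLin (xxzMat Δ L) χ)).re| ≤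
      #B * (1 / (2 * Δ) * (‖φ‖ * ‖χ‖)) := by
  set c := 1 / (2 * Δ) * (‖φ‖ * ‖χ‖)
  rw [inner_xxzMat, Complex.re_sum]
  calc _ ≤ ∑ x ∈ bonds L, |(bondForm Δ x (nextSite x) φ χ).re| := abs_sum_le_sum_abs _ _
    _ ≤ ∑ x ∈ bonds L, if x ∈ B then c else 0 := by
        refine sum_le_sum fun x hx => ?_
        split_ifs with hxB
        · exact abs_re_bondForm_le hΔ _ _ hdisj
        · simp [bondForm_eq_zero Δ _ _ hdisj (hswap x hx hxB)]
    _ ≤ #B * c := by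
        rw [← sum_filter, sum_const, nsmul_eq_mul]
        have : 0 ≤ c := by positivity
        gcongr
        exact fun x hx => (mem_filter.1 hx).2

def Polarized (a l : ℕ) (σ : SpinConf L) : Prop :=
  ∃ b : Bool, ∀ i : Fin L, a ≤ (i : ℕ) + 1 → (i : ℕ) + 1 ≤ a + l - 1 → σ i = b

lemma pJ_apply (a l : ℕ) (ψ : ChainSpace L) (σ : SpinConf L) :
    pJ L a l ψ σ = if Polarized a l σ then ψ σ else 0 := by
  simp only [pJ, Polarized, Bool.exists_bool, PiLp.toLp_apply]

lemma sub_pJ_apply (a l : ℕ) (ψ : ChainSpace L) (σ : SpinConf L) :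
    (ψ - pJ L a l ψ) σ = if Polarized a l σ then 0 else ψ σ := by
  rw [PiLp.sub_apply, pJ_apply]
  split_ifs <;> simp

lemma pJ_apply_eq_zero_or {a l : ℕ} {σ τ : SpinConf L} (h : Polarized a l τ ↔ Polarized a l σ)
    (ψ ψ' : ChainSpace L) : pJ L a l ψ σ = 0 ∨ (ψ' - pJ L a l ψ') τ = 0 := by
  rw [pJ_apply, sub_pJ_apply, h]
  split_ifs <;> simp

lemma sub_pJ_apply_eq_zero_or {a l : ℕ} {σ τ : SpinConf L}
    (h : Polarized a l τ ↔ Polarized a l σ) (ψ ψ' : ChainSpace L) :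
    (ψ - pJ L a l ψ) σ = 0 ∨ pJ L a l ψ' τ = 0 := by
  rw [pJ_apply, sub_pJ_apply, h]
  split_ifs <;> simp

lemma norm_sq_sub_pJ (a l : ℕ) (ψ : ChainSpace L) :
    ‖ψ - pJ L a l ψ‖ ^ 2 = ∑ σ, if Polarized a l σ then 0 else ‖ψ σ‖ ^ 2 := by
  simp only [EuclideanSpace.norm_sq_eq, sub_pJ_apply, apply_ite (‖·‖ ^ 2), norm_zero,
    ne_eq, OfNat.ofNat_ne_zero, not_false_eq_true, zero_pow]

lemma norm_sq_pJ_add_norm_sq_sub_pJ (a l : ℕ) (ψ : ChainSpace L) :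
    ‖pJ L a l ψ‖ ^ 2 + ‖ψ - pJ L a l ψ‖ ^ 2 = ‖ψ‖ ^ 2 := by
  simp only [EuclideanSpace.norm_sq_eq, ← sum_add_distrib, pJ_apply, sub_pJ_apply]
  refine sum_congr rfl fun σ _ => ?_
  split_ifs <;> simp

def discordBonds (σ : SpinConf L) : Finset (Fin L) :=
  (bonds L).filter fun x => σ x ≠ σ (nextSite x)

lemma totalDiscord_eq_sum (ψ : ChainSpace L) :
    totalDiscord ψ = ∑ σ, #(discordBonds σ) * ‖ψ σ‖ ^ 2 := by
  simp only [totalDiscord, discordWeight, discordSet, discordBonds, sum_filter]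
  rw [sum_comm]
  refine sum_congr rfl fun σ _ => ?_
  rw [← sum_filter, sum_const, nsmul_eq_mul]

lemma exists_ne_succ_of_ne {α : Type*} (f : ℕ → α) {s t : ℕ} (hst : s ≤ t) (h : f s ≠ f t) :
    ∃ i, s ≤ i ∧ i < t ∧ f i ≠ f (i + 1) := by
  induction t, hst using Nat.le_induction with
  | base => exact absurd rfl h
  | succ t hst ih =>
    by_cases hft : f s = f t
    · exact ⟨t, hst, t.lt_succ_self, hft ▸ h⟩
    · obtain ⟨i, hsi, hit, hi⟩ := ih hft
      exact ⟨i, hsi, by omega, hi⟩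

lemma exists_mem_discordBonds_of_ne {σ : SpinConf L} {i j : Fin L} (hij : i ≤ j)
    (h : σ i ≠ σ j) : ∃ x ∈ discordBonds σ, i ≤ x ∧ (x : ℕ) < j := by
  set f : ℕ → Bool := fun n => if hn : n < L then σ ⟨n, hn⟩ else false
  obtain ⟨n, hin, hnj, hn⟩ := exists_ne_succ_of_ne f (Fin.le_def.1 hij) (by simpa [f] using h)
  have hnL : n + 1 < L := by omega
  have hx : (⟨n, by omega⟩ : Fin L) ∈ bonds L := by simpa [bonds] using hnL
  refine ⟨⟨n, by omega⟩, mem_filter.2 ⟨hx, ?_⟩, Fin.le_def.2 hin, hnj⟩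
  simpa [f, hnL, nextSite, show n < L by omega] using hn

lemma exists_mem_discordBonds_of_not_polarized {a l : ℕ} {σ : SpinConf L}
    (h : ¬ Polarized a l σ) :
    ∃ x ∈ discordBonds σ, a ≤ (x : ℕ) + 1 ∧ (x : ℕ) + 2 ≤ a + l - 1 := by
  simp only [Polarized, not_exists, not_forall] at h
  obtain ⟨i, hai, hil, -⟩ := h false
  obtain ⟨j, haj, hjl, hij⟩ := h (σ i)
  rcases le_total i j with hle | hle
  · obtain ⟨x, hx, hix, hxj⟩ := exists_mem_discordBonds_of_ne hle (Ne.symm hij)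
    exact ⟨x, hx, by omega, by omega⟩
  · obtain ⟨x, hx, hjx, hxi⟩ := exists_mem_discordBonds_of_ne hle hij
    exact ⟨x, hx, by omega, by omega⟩

/-- A discordant bond inside the `k`-th block `[k l + 1, k l + l]` is mapped to `k` by
`x ↦ x / l`. -/
lemma card_not_polarized_blocks_le (l m : ℕ) (σ : SpinConf L) :
    #((range m).filter fun k => ¬ Polarized (k * l + 1) l σ) ≤ #(discordBonds σ) := by
  refine card_le_card_of_surjOn (fun x : Fin L => (x : ℕ) / l) fun k hk => ?_
  obtain ⟨x, hx, hkx, hxk⟩ := exists_mem_discordBonds_of_not_polarized (mem_filter.1 hk).2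
  refine ⟨x, hx, Nat.div_eq_of_lt_le (by omega) ?_⟩
  rw [add_one_mul]
  omega

lemma sum_norm_sq_sub_pJ_blocks_le (l m : ℕ) (ψ : ChainSpace L) :
    ∑ k ∈ range m, ‖ψ - pJ L (k * l + 1) l ψ‖ ^ 2 ≤ totalDiscord ψ := by
  simp only [norm_sq_sub_pJ, totalDiscord_eq_sum]
  rw [sum_comm]
  refine sum_le_sum fun σ _ => ?_
  rw [sum_ite, sum_const_zero, zero_add, sum_const, nsmul_eq_mul]
  gcongr
  exact card_not_polarized_blocks_le l m σ

lemma exists_interval_mul_norm_sq_sub_pJ_le {l : ℕ} (hl : 1 ≤ l) (hlL : l ≤ L)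
    (ψ : ChainSpace L) :
    ∃ a, 1 ≤ a ∧ a + l - 1 ≤ L ∧ (L / l : ℕ) * ‖ψ - pJ L a l ψ‖ ^ 2 ≤ totalDiscord ψ := by
  set m := L / l
  have hm : 0 < m := Nat.div_pos hlL (by omega)
  have hsum : ∑ k ∈ range m, (m : ℝ) * ‖ψ - pJ L (k * l + 1) l ψ‖ ^ 2 ≤
      ∑ _k ∈ range m, totalDiscord ψ := by
    rw [← mul_sum, sum_const, card_range, nsmul_eq_mul]
    exact mul_le_mul_of_nonneg_left (sum_norm_sq_sub_pJ_blocks_le l m ψ) m.cast_nonneg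
  obtain ⟨k, hk, hkψ⟩ := exists_le_of_sum_le (nonempty_range_iff.2 hm.ne') hsum
  refine ⟨k * l + 1, by omega, ?_, hkψ⟩
  have : (k + 1) * l ≤ m * l := Nat.mul_le_mul_right l (mem_range.1 hk)
  have : m * l ≤ L := Nat.div_mul_le_self L l
  rw [add_one_mul] at *
  omega

def boundaryBonds (a l : ℕ) : Finset (Fin L) :=
  univ.filter fun x => (x : ℕ) + 2 = a ∨ (x : ℕ) + 1 = a + l - 1

lemma card_boundaryBonds_le (a l : ℕ) : #(boundaryBonds a l : Finset (Fin L)) ≤ 2 := by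
  rw [boundaryBonds, filter_or]
  refine (card_union_le _ _).trans ?_
  have h₁ : #(univ.filter fun x : Fin L => (x : ℕ) + 2 = a) ≤ 1 :=
    card_le_one.2 fun x hx y hy => Fin.ext (by simp at hx hy; omega)
  have h₂ : #(univ.filter fun x : Fin L => (x : ℕ) + 1 = a + l - 1) ≤ 1 :=
    card_le_one.2 fun x hx y hy => Fin.ext (by simp at hx hy; omega)
  omega

/-- Off the boundary of `J`, the two sites of a bond are both inside or both outside `J`. -/
lemma Polarized.of_swapPair {a l : ℕ} {x : Fin L} (hx : x ∈ bonds L)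
    (hxB : x ∉ (boundaryBonds a l : Finset (Fin L))) {σ : SpinConf L}
    (h : Polarized a l (swapPair x (nextSite x) σ)) : Polarized a l σ := by
  obtain ⟨b, hb⟩ := h
  have hnx := val_nextSite hx
  simp only [boundaryBonds, mem_filter, mem_univ, true_and, not_or] at hxB
  refine ⟨b, fun i hai hil => ?_⟩
  by_cases hix : i = x
  · subst hix
    rw [← swapPair_apply_right i (nextSite i) σ]
    exact hb _ (by omega) (by omega)
  by_cases hin : i = nextSite x
  · subst hin
    rw [← swapPair_apply_left x (nextSite x) σ]
    exact hb _ (by omega) (by omega)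
  rw [← swapPair_apply_of_ne hix hin σ]
  exact hb i hai hil

lemma polarized_swapPair_iff {a l : ℕ} {x : Fin L} (hx : x ∈ bonds L)
    (hxB : x ∉ (boundaryBonds a l : Finset (Fin L))) (σ : SpinConf L) :
    Polarized a l (swapPair x (nextSite x) σ) ↔ Polarized a l σ :=
  ⟨Polarized.of_swapPair hx hxB, fun h => Polarized.of_swapPair hx hxB <| by
    rwa [swapPair_involutive x (nextSite x) σ]⟩

lemma inner_map_add_self {E : Type*} [NormedAddCommGroup E] [InnerProductSpace ℂ E]
    (T : E →ₗ[ℂ] E) (φ χ : E) :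
    inner ℂ (φ + χ) (T (φ + χ)) = inner ℂ φ (T φ) + inner ℂ χ (T χ) +
      (inner ℂ φ (T χ) + inner ℂ χ (T φ)) := by
  simp only [map_add, inner_add_left, inner_add_right]
  ring

lemma re_inner_xxzMat_pJ_le {Δ : ℝ} (hΔ : 1 ≤ Δ) (a l : ℕ) (ψ : ChainSpace L) :
    (inner ℂ (pJ L a l ψ) (Matrix.toEuclideanLin (xxzMat Δ L) (pJ L a l ψ))).re ≤
      (inner ℂ ψ (Matrix.toEuclideanLin (xxzMat Δ L) ψ)).re +
        2 * Δ⁻¹ * (‖pJ L a l ψ‖ * ‖ψ - pJ L a l ψ‖) := by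
  set φ := pJ L a l ψ
  set χ := ψ - pJ L a l ψ
  have hΔ0 : 0 ≤ Δ := by linarith
  have hB := card_boundaryBonds_le (L := L) a l
  have hφχ := abs_re_inner_xxzMat_le hΔ0 (boundaryBonds a l) (φ := φ) (χ := χ)
    (fun σ => pJ_apply_eq_zero_or Iff.rfl ψ ψ)
    (fun x hx hxB σ => pJ_apply_eq_zero_or (polarized_swapPair_iff hx hxB σ) ψ ψ)
  have hχφ := abs_re_inner_xxzMat_le hΔ0 (boundaryBonds a l) (φ := χ) (χ := φ)
    (fun σ => sub_pJ_apply_eq_zero_or Iff.rfl ψ ψ)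
    (fun x hx hxB σ => sub_pJ_apply_eq_zero_or (polarized_swapPair_iff hx hxB σ) ψ ψ)
  have hsplit := congrArg Complex.re (inner_map_add_self (Matrix.toEuclideanLin (xxzMat Δ L)) φ χ)
  rw [add_sub_cancel] at hsplit
  simp only [Complex.add_re] at hsplit
  have hχ := re_inner_xxzMat_self_nonneg hΔ χ
  have hc : (#(boundaryBonds a l : Finset (Fin L)) : ℝ) * (1 / (2 * Δ) * (‖φ‖ * ‖χ‖)) ≤
      Δ⁻¹ * (‖φ‖ * ‖χ‖) := by
    calc _ ≤ (2 : ℝ) * (1 / (2 * Δ) * (‖φ‖ * ‖χ‖)) := by gcongr; exact_mod_cast hB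
      _ = _ := by field_simp
  rw [mul_comm ‖χ‖] at hχφ
  linarith [neg_abs_le (inner ℂ φ (Matrix.toEuclideanLin (xxzMat Δ L) χ)).re,
    neg_abs_le (inner ℂ χ (Matrix.toEuclideanLin (xxzMat Δ L) φ)).re]

lemma div_sq_le_of_energy_split {N p c Q E ε δ : ℝ} (hN : 0 < N) (hE : 0 ≤ E) (hδ : 0 ≤ δ)
    (hp : 0 ≤ p) (hc : 0 ≤ c) (hpc : p ^ 2 + c ^ 2 = N) (hcε : c ^ 2 ≤ ε * N) (hε : ε < 1)
    (hQ : Q ≤ E * N + 2 * δ * (p * c)) :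
    Q / p ^ 2 ≤ E / (1 - ε) + 2 * δ * √(ε / (1 - ε)) := by
  have h1ε : 0 < 1 - ε := by linarith
  have hε0 : 0 ≤ ε := nonneg_of_mul_nonneg_left ((sq_nonneg c).trans hcε) hN
  have hpN : (1 - ε) * N ≤ p ^ 2 := by linarith
  have hp2 : 0 < p ^ 2 := lt_of_lt_of_le (by positivity) hpN
  have hEN : E * N ≤ E / (1 - ε) * p ^ 2 := by
    rw [div_mul_eq_mul_div, le_div_iff₀ h1ε]
    nlinarith
  have hcp : c ≤ √(ε / (1 - ε)) * p := by
    rw [← sq_le_sq₀ hc (by positivity), mul_pow, Real.sq_sqrt (by positivity),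
      div_mul_eq_mul_div, le_div_iff₀ h1ε]
    nlinarith
  rw [div_le_iff₀ hp2]
  nlinarith [mul_le_mul_of_nonneg_left hcp (by positivity : 0 ≤ 2 * δ * p)]

end XXZ

end

open XXZ in
theorem stmt12_general (Δ : ℝ) (hΔ : 1 < Δ) (L : ℕ)
    (ψ : ChainSpace L) (hψ : ψ ≠ 0)
    (E : ℝ) (hE : E = (inner ℂ ψ (Matrix.toEuclideanLin (xxzMat Δ L) ψ) : ℂ).re / ‖ψ‖ ^ 2)
    (l : ℕ) (hl1 : 1 ≤ l) (hlL : l < L)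
    (ε : ℝ) (hε : ε = 2 * E / ((1 - Δ⁻¹) * ((L / l : ℕ) : ℝ))) :
    ∃ a : ℕ, 1 ≤ a ∧ a + l - 1 ≤ L ∧
      1 - ε ≤ ‖pJ L a l ψ‖ ^ 2 / ‖ψ‖ ^ 2 ∧
      (ε < 1 →
        (inner ℂ (pJ L a l ψ) (Matrix.toEuclideanLin (xxzMat Δ L) (pJ L a l ψ)) : ℂ).re /
            ‖pJ L a l ψ‖ ^ 2
          ≤ E / (1 - ε) + 2 * Δ⁻¹ * Real.sqrt (ε / (1 - ε))) := by
  have hγ : 0 < 1 - Δ⁻¹ := sub_pos.2 (inv_lt_one_of_one_lt₀ hΔ)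
  have hN : 0 < ‖ψ‖ ^ 2 := by positivity
  have hEN : (inner ℂ ψ (Matrix.toEuclideanLin (xxzMat Δ L) ψ)).re = E * ‖ψ‖ ^ 2 := by
    rw [hE, div_mul_cancel₀ _ hN.ne']
  have hdiscord := totalDiscord_le_re_inner_xxzMat (zero_le_one.trans hΔ.le) ψ
  have hE0 : 0 ≤ E := by
    have := mul_nonneg hγ.le (totalDiscord_nonneg ψ)
    nlinarith
  obtain ⟨a, ha, haL, hblock⟩ := exists_interval_mul_norm_sq_sub_pJ_le hl1 hlL.le ψ
  have hm : (0 : ℝ) < (L / l : ℕ) := by exact_mod_cast Nat.div_pos hlL.le (by omega)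
  have hdefect : ‖ψ - pJ L a l ψ‖ ^ 2 ≤ ε * ‖ψ‖ ^ 2 := by
    rw [hε, div_mul_eq_mul_div, le_div_iff₀ (by positivity)]
    nlinarith
  have hpyth := norm_sq_pJ_add_norm_sq_sub_pJ a l ψ
  refine ⟨a, ha, haL, by rw [le_div_iff₀ hN]; linarith, fun hε1 => ?_⟩
  refine div_sq_le_of_energy_split hN hE0 (by positivity) (norm_nonneg _) (norm_nonneg _) hpyth
    hdefect hε1 ?_
  rw [← hEN]
  exact re_inner_xxzMat_pJ_le hΔ.le a l ψ

/-- existence of an almost fully polarized subinterval.  For any nonzero state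
`ψ` with energy `E` and any `1 ≤ l < L`, there is a subinterval `J = [a, a+l−1] ⊆ [1,L]`
with `‖P_J ψ‖²/‖ψ‖² ≥ 1 − ε`, `ε = 2E/(γ⌊L/l⌋)`, `γ = 1 − Δ⁻¹`; and if `ε < 1` the
projected state has energy at most `E/(1−ε) + 2Δ⁻¹√(ε/(1−ε))`. -/
theorem stmt12 (Δ : ℝ) (hΔ : 1 < Δ) (L : ℕ) (hL : 2 ≤ L)
    (ψ : ChainSpace L) (hψ : ψ ≠ 0)
    (E : ℝ) (hE : E = (inner ℂ ψ (Matrix.toEuclideanLin (xxzMat Δ L) ψ) : ℂ).re / ‖ψ‖ ^ 2)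
    (l : ℕ) (hl1 : 1 ≤ l) (hlL : l < L)
    (ε : ℝ) (hε : ε = 2 * E / ((1 - Δ⁻¹) * ((L / l : ℕ) : ℝ))) :
    ∃ a : ℕ, 1 ≤ a ∧ a + l - 1 ≤ L ∧
      1 - ε ≤ ‖pJ L a l ψ‖ ^ 2 / ‖ψ‖ ^ 2 ∧
      (ε < 1 →
        (inner ℂ (pJ L a l ψ) (Matrix.toEuclideanLin (xxzMat Δ L) (pJ L a l ψ)) : ℂ).re /
            ‖pJ L a l ψ‖ ^ 2
          ≤ E / (1 - ε) + 2 * Δ⁻¹ * Real.sqrt (ε / (1 - ε))) :=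
  stmt12_general Δ hΔ L ψ hψ E hE l hl1 hlL ε hε
end
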